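/- arXiv:1711.02002 — 2 statements merged into one kernel-verified Lean document; each statement's English description precedes it below -/
import Mathlib

section
/- For n ≥ 2, let J_n = (x z_1 z_2 ⋯ z_{n+1}) + Σ_{i=1}^{n-1} (z_i, ..., z_{n+1})·(y_i) ⊂ T = K[x, y_1,...,y_{n-1}, z_1,...,z_{n+1}]. Then the Hilbert series of T/J_n equals (1 + nλ − (n−2)λ^2 + λ^3 + ⋯ + λ^{n+1}) / (1−λ)^{n+1}. -/
/-!
A monomial lies in `J_n` iff it is divisible by one of the monomial generators, so `T/J_n` has
the standard monomials as a basis. Sort them by their least `y`-index. Those without `y` are the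
monomials in `x, z₁, …, z_{n+1}` not divisible by `x z₁⋯z_{n+1}`, with series
`(1 - λ^{n+2})/(1-λ)^{n+2}`. Those whose least `y`-index is `i` contain no `z_j` with `j ≥ i`, so
they are `y_i` times an arbitrary monomial in the `n` variables `x, y_i, …, y_{n-1}, z₁, …, z_{i-1}`,
with series `λ/(1-λ)^n`. Hence `H(λ)(1-λ)^{n+2} = 1 - λ^{n+2} + (n-1)λ(1-λ)²`, and cancelling one
factor `1 - λ` gives the formula.
-/

open MvPolynomial

/-- An element `f` of the shifted graded free module `⊕ⱼ S(-a j)` over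
`S = K[x₁,…]` is homogeneous of degree `t`. -/
def IsHomVec {K : Type} [Field K] {σ : Type} {b : ℕ} (a : Fin b → ℕ) (t : ℕ)
    (f : Fin b → MvPolynomial σ K) : Prop :=
  ∀ j, if a j ≤ t then (f j).IsHomogeneous (t - a j) else f j = 0

/-- A graded free resolution of an `S`-module `N` (for `S = K[x₁,…]`, `S`-module `N`
equipped with a notion `hom t` of homogeneous elements of degree `t`):
an exact sequence `⋯ → F₁ → F₀ → N → 0` of graded free modules
`Fᵢ = ⊕ⱼ S(-a i j)` with degree-preserving maps. -/
structure GradedFreeRes (K : Type) [Field K] (σ : Type) (N : Type) [AddCommGroup N]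
    [Module (MvPolynomial σ K) N] (hom : ℕ → Set N) where
  b : ℕ → ℕ
  a : ∀ i, Fin (b i) → ℕ
  φ : ∀ i, (Fin (b (i+1)) → MvPolynomial σ K) →ₗ[MvPolynomial σ K] (Fin (b i) → MvPolynomial σ K)
  ε : (Fin (b 0) → MvPolynomial σ K) →ₗ[MvPolynomial σ K] N
  surj : Function.Surjective ε
  exact0 : LinearMap.ker ε = LinearMap.range (φ 0)
  exact : ∀ i, LinearMap.ker (φ i) = LinearMap.range (φ (i+1))
  hdeg : ∀ i t f, IsHomVec (a (i+1)) t f → IsHomVec (a i) t (φ i f)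
  hdeg0 : ∀ t f, IsHomVec (a 0) t f → ε f ∈ hom t

/-- The Castelnuovo–Mumford regularity of a homogeneous ideal `I ⊆ S`:
the least `r` such that `I` admits a graded free resolution all of whose
shifts satisfy `a i j ≤ i + r`. -/
noncomputable def idealReg {K : Type} [Field K] {σ : Type} (I : Ideal (MvPolynomial σ K)) : ℕ :=
  sInf { r | ∃ R : GradedFreeRes K σ I (fun t => {x : I | (x : MvPolynomial σ K).IsHomogeneous t}),
    ∀ i j, R.a i j ≤ i + r }

/-- The image of the degree-`t` homogeneous part of `S` in `S/I`. -/
noncomputable def quotHom {K : Type} [Field K] {σ : Type} (I : Ideal (MvPolynomial σ K)) (t : ℕ) :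
    Submodule K (MvPolynomial σ K ⧸ I) :=
  (homogeneousSubmodule σ K t).map (Ideal.Quotient.mkₐ K I).toLinearMap

/-- The Castelnuovo–Mumford regularity of `S/I`. -/
noncomputable def quotReg {K : Type} [Field K] {σ : Type} (I : Ideal (MvPolynomial σ K)) : ℕ :=
  sInf { r | ∃ R : GradedFreeRes K σ (MvPolynomial σ K ⧸ I) (fun t => (quotHom I t : Set _)),
    ∀ i j, R.a i j ≤ i + r }

/-- The Hilbert series of `S/I`, as a formal power series over `ℤ`. -/
noncomputable def hilbSeries {K : Type} [Field K] {σ : Type} (I : Ideal (MvPolynomial σ K)) :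
    PowerSeries ℤ :=
  PowerSeries.mk fun t => (Module.finrank K (quotHom I t) : ℤ)

/-- The depth of `S/I` with respect to the irrelevant maximal ideal `(x₁,…,xₙ)`:
the maximal length of a regular sequence on `S/I` consisting of elements of
the irrelevant ideal. -/
noncomputable def quotDepth {K : Type} [Field K] {σ : Type} (I : Ideal (MvPolynomial σ K)) : ℕ :=
  sSup { k | ∃ rs : List (MvPolynomial σ K), rs.length = k ∧
    (∀ r ∈ rs, r ∈ Ideal.span (Set.range (X : σ → MvPolynomial σ K))) ∧
    RingTheory.Sequence.IsRegular (MvPolynomial σ K ⧸ I) rs }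

/-- An ideal is homogeneous if it is generated by homogeneous polynomials. -/
def IsHomogeneousIdeal {K : Type} [Field K] {σ : Type} (I : Ideal (MvPolynomial σ K)) : Prop :=
  ∃ G : Set (MvPolynomial σ K), (∀ g ∈ G, ∃ d, g.IsHomogeneous d) ∧ I = Ideal.span G

/-- An ideal is a monomial ideal if it is generated by monomials. -/
def IsMonomialIdeal {K : Type} [Field K] {σ : Type} (I : Ideal (MvPolynomial σ K)) : Prop :=
  ∃ G : Set (MvPolynomial σ K), (∀ g ∈ G, ∃ d : σ →₀ ℕ, g = monomial d 1) ∧ I = Ideal.span G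

/-- `S/I` is Cohen–Macaulay: depth equals Krull dimension. -/
def QuotIsCM {K : Type} [Field K] {σ : Type} (I : Ideal (MvPolynomial σ K)) : Prop :=
  ringKrullDim (MvPolynomial σ K ⧸ I) = (quotDepth I : WithBot (WithTop ℕ))

/-- `deg h_{S/I}(λ) = s`: the Hilbert series of `S/I` can be written as
`h(λ)/(1-λ)^d` with `d = dim S/I`, `h ∈ ℤ[λ]`, `h(1) ≠ 0` and `deg h = s`. -/
def HPolyDeg {K : Type} [Field K] {σ : Type} (I : Ideal (MvPolynomial σ K)) (s : ℕ) : Prop :=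
  ∃ (d : ℕ) (h : Polynomial ℤ), ringKrullDim (MvPolynomial σ K ⧸ I) = (d : WithBot (WithTop ℕ)) ∧
    h.eval 1 ≠ 0 ∧ hilbSeries I * (1 - PowerSeries.X) ^ d = (h : PowerSeries ℤ) ∧
    h.natDegree = s

/-- The monomial ideal `J_n = (x z₁⋯z_{n+1}) + Σ_{i=1}^{n-1} (z_i,…,z_{n+1})·(y_i)`
of `T = K[x, y₁,…,y_{n-1}, z₁,…,z_{n+1}]`, where `x = X (Sum.inl ())`,
`y_i = X (Sum.inr (Sum.inl (i-1)))` and `z_j = X (Sum.inr (Sum.inr (j-1)))`. -/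
noncomputable def Jideal (K : Type) [Field K] (n : ℕ) :
    Ideal (MvPolynomial (Unit ⊕ Fin (n-1) ⊕ Fin (n+1)) K) :=
  Ideal.span ({X (Sum.inl ()) * ∏ j : Fin (n+1), X (Sum.inr (Sum.inr j))} ∪
    {p | ∃ (i : Fin (n-1)) (j : Fin (n+1)), i.1 ≤ j.1 ∧
      p = X (Sum.inr (Sum.inl i)) * X (Sum.inr (Sum.inr j))})


section MonomialSeries

open Function

variable {σ : Type*}

noncomputable def monomialSeries (s : Set (σ →₀ ℕ)) : PowerSeries ℤ :=
  PowerSeries.mk fun t => ((s ∩ {m | m.degree = t}).ncard : ℤ)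

lemma coeff_monomialSeries (s : Set (σ →₀ ℕ)) (t : ℕ) :
    PowerSeries.coeff t (monomialSeries s) = ((s ∩ {m | m.degree = t}).ncard : ℤ) :=
  PowerSeries.coeff_mk _ _

lemma finite_inter_degree_eq [Finite σ] (s : Set (σ →₀ ℕ)) (t : ℕ) :
    (s ∩ {m | m.degree = t}).Finite :=
  (Finsupp.finite_of_degree_eq t).inter_of_right s

lemma monomialSeries_union [Finite σ] {s u : Set (σ →₀ ℕ)} (h : Disjoint s u) :
    monomialSeries (s ∪ u) = monomialSeries s + monomialSeries u := by
  ext t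
  rw [map_add, coeff_monomialSeries, coeff_monomialSeries, coeff_monomialSeries,
    Set.union_inter_distrib_right,
    Set.ncard_union_eq (h.mono Set.inter_subset_left Set.inter_subset_left)
      (finite_inter_degree_eq s t) (finite_inter_degree_eq u t), Nat.cast_add]

lemma monomialSeries_iUnion [Finite σ] {ι : Type*} [Fintype ι] {s : ι → Set (σ →₀ ℕ)}
    (h : Pairwise (Disjoint on s)) : monomialSeries (⋃ i, s i) = ∑ i, monomialSeries (s i) := by
  ext t
  rw [map_sum, coeff_monomialSeries, Set.iUnion_inter,
    Set.ncard_iUnion_of_finite (fun i => finite_inter_degree_eq (s i) t)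
      (fun i j hij => (h hij).mono Set.inter_subset_left Set.inter_subset_left),
    finsum_eq_sum_of_fintype, Nat.cast_sum]
  simp only [coeff_monomialSeries]

lemma monomialSeries_image_add (g : σ →₀ ℕ) (s : Set (σ →₀ ℕ)) :
    monomialSeries ((g + ·) '' s) = PowerSeries.X ^ g.degree * monomialSeries s := by
  ext t
  rw [PowerSeries.coeff_X_pow_mul', coeff_monomialSeries]
  split_ifs with h
  · have : (g + ·) '' s ∩ {m | m.degree = t} =
        (g + ·) '' (s ∩ {m | m.degree = t - g.degree}) := by
      ext m
      constructor
      · rintro ⟨⟨m, hm, rfl⟩, hdeg : (g + m).degree = t⟩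
        rw [map_add] at hdeg
        exact ⟨m, ⟨hm, show m.degree = t - g.degree by omega⟩, rfl⟩
      · rintro ⟨m, ⟨hm, hdeg : m.degree = t - g.degree⟩, rfl⟩
        exact ⟨⟨m, hm, rfl⟩, show (g + m).degree = t by rw [map_add]; omega⟩
    rw [this, Set.ncard_image_of_injective _ (add_right_injective g), coeff_monomialSeries]
  · suffices (g + ·) '' s ∩ {m | m.degree = t} = ∅ by
      rw [this, Set.ncard_empty, Nat.cast_zero]
    refine Set.eq_empty_of_forall_notMem ?_
    rintro _ ⟨⟨m, -, rfl⟩, hdeg : (g + m).degree = t⟩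
    rw [map_add] at hdeg
    omega

lemma mk_choose_mul_one_sub_pow (d : ℕ) :
    (PowerSeries.mk fun t => ((d + t - 1).choose t : ℤ)) * (1 - PowerSeries.X) ^ d = 1 := by
  cases d with
  | zero =>
    ext t
    cases t <;> simp [PowerSeries.coeff_one]
  | succ d =>
    simp_rw [add_right_comm d 1, Nat.add_sub_cancel, ← Nat.choose_symm_add]
    exact PowerSeries.mk_add_choose_mul_one_sub_pow_eq_one ℤ d

variable [DecidableEq σ]

lemma monomialSeries_supported_mul (V : Finset σ) :
    monomialSeries {m | m.support ⊆ V} * (1 - PowerSeries.X) ^ V.card = 1 := by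
  convert mk_choose_mul_one_sub_pow V.card
  ext t
  rw [coeff_monomialSeries, PowerSeries.coeff_mk, ← Finset.card_finsuppAntidiag_nat_eq_choose,
    ← Set.ncard_coe_finset]
  congr 2
  ext m
  simp only [Set.mem_inter_iff, Set.mem_ofPred_eq, Finset.mem_coe, Finset.mem_finsuppAntidiag]
  rw [and_comm]
  refine and_congr_left fun hV => ?_
  rw [Finsupp.degree_apply, Finset.sum_subset hV fun _ _ h => Finsupp.notMem_support_iff.mp h]

lemma supported_le_eq_image_add {V : Finset σ} {g : σ →₀ ℕ} (hg : g.support ⊆ V) :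
    {m : σ →₀ ℕ | m.support ⊆ V ∧ g ≤ m} = (g + ·) '' {m | m.support ⊆ V} := by
  ext m
  constructor
  · rintro ⟨hV, hle⟩
    exact ⟨m - g, (Finsupp.support_tsub).trans hV, add_tsub_cancel_of_le hle⟩
  · rintro ⟨m, hV : m.support ⊆ V, rfl⟩
    exact ⟨Finsupp.support_add.trans (Finset.union_subset hg hV), le_self_add⟩

lemma monomialSeries_supported_le_mul {V : Finset σ} {g : σ →₀ ℕ} (hg : g.support ⊆ V) :
    monomialSeries {m | m.support ⊆ V ∧ g ≤ m} * (1 - PowerSeries.X) ^ V.card =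
      PowerSeries.X ^ g.degree := by
  rw [supported_le_eq_image_add hg, monomialSeries_image_add, mul_assoc,
    monomialSeries_supported_mul, mul_one]

lemma monomialSeries_supported_not_le_mul [Finite σ] {V : Finset σ} {g : σ →₀ ℕ}
    (hg : g.support ⊆ V) :
    monomialSeries {m | m.support ⊆ V ∧ ¬ g ≤ m} * (1 - PowerSeries.X) ^ V.card =
      1 - PowerSeries.X ^ g.degree := by
  have hunion : {m | m.support ⊆ V ∧ ¬ g ≤ m} ∪ {m | m.support ⊆ V ∧ g ≤ m} =
      {m : σ →₀ ℕ | m.support ⊆ V} := by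
    ext m
    simp only [Set.mem_union, Set.mem_ofPred_eq]
    tauto
  have h := monomialSeries_supported_mul V
  rw [← hunion, monomialSeries_union (Set.disjoint_left.mpr fun _ h h' => h.2 h'.2), add_mul,
    monomialSeries_supported_le_mul hg] at h
  linear_combination h

end MonomialSeries

theorem LinearIndepOn.finrank_span_image {R M ι : Type*} [Ring R] [StrongRankCondition R]
    [AddCommGroup M] [Module R M] {v : ι → M} {s : Set ι} (hs : LinearIndepOn R v s) :
    Module.finrank R (Submodule.span R (v '' s)) = s.ncard := by
  rw [Module.finrank, ← Cardinal.toNat_toENat, toENat_rank_span_set hs, Set.ncard_def]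

section MonomialIdeal

variable {K : Type} [Field K] {σ : Type} {G : Set (σ →₀ ℕ)}

lemma eq_zero_of_mem_restrictSupport_of_mem_span_monomial {p : MvPolynomial σ K}
    (hp : p ∈ restrictSupport K {m | ∀ g ∈ G, ¬ g ≤ m})
    (hI : p ∈ Ideal.span ((monomial · (1 : K)) '' G)) : p = 0 := by
  rw [← support_eq_empty, Finset.eq_empty_iff_forall_notMem]
  intro m hm
  obtain ⟨g, hg, hle⟩ := mem_ideal_span_monomial_image.mp hI m hm
  exact hp hm g hg hle

lemma linearIndepOn_mk_monomial :
    LinearIndepOn K (fun m => Ideal.Quotient.mkₐ K (Ideal.span ((monomial · (1 : K)) '' G))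
      (monomial m 1)) {m | ∀ g ∈ G, ¬ g ≤ m} := by
  refine ((basisMonomials σ K).linearIndependent.linearIndepOn _).map_injOn
    (Ideal.Quotient.mkₐ K _).toLinearMap ?_
  rw [coe_basisMonomials, ← restrictSupport_eq_span]
  intro p hp q hq hpq
  rw [← sub_eq_zero]
  exact eq_zero_of_mem_restrictSupport_of_mem_span_monomial (sub_mem hp hq)
    (Ideal.Quotient.eq.mp hpq)

lemma quotHom_span_monomial (t : ℕ) :
    quotHom (Ideal.span ((monomial · (1 : K)) '' G)) t =
      Submodule.span K ((fun m => Ideal.Quotient.mkₐ K (Ideal.span ((monomial · (1 : K)) '' G))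
        (monomial m 1)) '' ({m | ∀ g ∈ G, ¬ g ≤ m} ∩ {m | m.degree = t})) := by
  rw [quotHom, homogeneousSubmodule_eq_finsupp_supported, ← restrictSupport,
    restrictSupport_eq_span, Submodule.map_span, Set.image_image]
  refine le_antisymm (Submodule.span_le.mpr ?_) (Submodule.span_mono
    (Set.image_mono Set.inter_subset_right))
  rintro _ ⟨m, hdeg, rfl⟩
  by_cases hm : ∃ g ∈ G, g ≤ m
  · suffices monomial m (1 : K) ∈ Ideal.span ((monomial · (1 : K)) '' G) by
      simp [Ideal.Quotient.eq_zero_iff_mem.mpr this]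
    refine mem_ideal_span_monomial_image.mpr fun m' hm' => ?_
    rw [Finset.mem_singleton.mp (support_monomial_subset hm')]
    exact hm
  · exact Submodule.subset_span ⟨m, ⟨fun g hg hle => hm ⟨g, hg, hle⟩, hdeg⟩, rfl⟩

theorem hilbSeries_span_monomial :
    hilbSeries (Ideal.span ((monomial · (1 : K)) '' G)) =
      monomialSeries {m | ∀ g ∈ G, ¬ g ≤ m} := by
  ext t
  rw [hilbSeries, PowerSeries.coeff_mk, coeff_monomialSeries, quotHom_span_monomial,
    (linearIndepOn_mk_monomial.mono Set.inter_subset_left).finrank_span_image]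

end MonomialIdeal

namespace Jideal

open Function

variable {n : ℕ}

abbrev Var (n : ℕ) : Type := Unit ⊕ Fin (n - 1) ⊕ Fin (n + 1)

abbrev varX : Var n := .inl ()
abbrev varY (i : Fin (n - 1)) : Var n := .inr (.inl i)
abbrev varZ (j : Fin (n + 1)) : Var n := .inr (.inr j)

noncomputable def xzGen : Var n →₀ ℕ :=
  Finsupp.single varX 1 + ∑ j, Finsupp.single (varZ j) 1

noncomputable def yzGen (i : Fin (n - 1)) (j : Fin (n + 1)) : Var n →₀ ℕ :=
  Finsupp.single (varY i) 1 + Finsupp.single (varZ j) 1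

def gens (n : ℕ) : Set (Var n →₀ ℕ) :=
  {xzGen} ∪ {g | ∃ (i : Fin (n - 1)) (j : Fin (n + 1)), i.1 ≤ j.1 ∧ g = yzGen i j}

theorem eq_span_monomial_gens (K : Type) [Field K] :
    Jideal K n = Ideal.span ((monomial · (1 : K)) '' gens n) := by
  have hX : ∀ a b : Var n, (X a * X b : MvPolynomial (Var n) K) =
      monomial (Finsupp.single a 1 + Finsupp.single b 1) 1 := by
    simp [X, monomial_mul]
  rw [Jideal, gens, Set.image_union, Set.image_singleton]
  congr 3
  · rw [xzGen, ← mul_one (1 : K), ← monomial_mul, monomial_sum_one]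
    rfl
  · ext p
    simp [yzGen, hX, eq_comm]

lemma xzGen_le_iff {m : Var n →₀ ℕ} :
    xzGen ≤ m ↔ 1 ≤ m varX ∧ ∀ j, 1 ≤ m (varZ j) := by
  simp [Finsupp.le_def, Sum.forall, Unique.forall_iff, xzGen, Finsupp.single_apply,
    Finset.filter_eq']

lemma yzGen_le_iff {i : Fin (n - 1)} {j : Fin (n + 1)} {m : Var n →₀ ℕ} :
    yzGen i j ≤ m ↔ 1 ≤ m (varY i) ∧ 1 ≤ m (varZ j) := by
  simp [Finsupp.le_def, Sum.forall, yzGen, Finsupp.single_apply]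
  grind

lemma degree_xzGen : (xzGen : Var n →₀ ℕ).degree = n + 2 := by
  simp [xzGen, map_sum]
  omega

noncomputable def varsNoY (n : ℕ) : Finset (Var n) :=
  Finset.univ.disjSum ((∅ : Finset (Fin (n - 1))).disjSum Finset.univ)

noncomputable def varsMinY (i : Fin (n - 1)) : Finset (Var n) :=
  Finset.univ.disjSum ((Finset.Ici i).disjSum (Finset.Iio (Fin.castLE (by omega) i)))

lemma card_varsNoY : (varsNoY n).card = n + 2 := by
  simp [varsNoY, Finset.card_disjSum]
  omega

lemma card_varsMinY (i : Fin (n - 1)) : (varsMinY i).card = n := by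
  simp [varsMinY, Finset.card_disjSum]
  have := i.pos
  omega

lemma support_subset_varsNoY {m : Var n →₀ ℕ} :
    m.support ⊆ varsNoY n ↔ ∀ i, m (varY i) = 0 := by
  rw [← Finset.coe_subset, Finsupp.support_subset_iff]
  simp [varsNoY, Sum.forall]

lemma support_subset_varsMinY {i : Fin (n - 1)} {m : Var n →₀ ℕ} :
    m.support ⊆ varsMinY i ↔
      (∀ k < i, m (varY k) = 0) ∧ ∀ j : Fin (n + 1), i.1 ≤ j.1 → m (varZ j) = 0 := by
  rw [← Finset.coe_subset, Finsupp.support_subset_iff]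
  simp only [varsMinY, Sum.forall, Finset.mem_coe, Finset.inl_mem_disjSum, Finset.inr_mem_disjSum,
    Finset.mem_univ, Finset.mem_Ici, Finset.mem_Iio, not_true, not_le, not_lt, false_imp_iff,
    implies_true, true_and, Fin.le_def, Fin.val_castLE]
  rfl

def stdNoY (n : ℕ) : Set (Var n →₀ ℕ) := {m | m.support ⊆ varsNoY n ∧ ¬ xzGen ≤ m}

def stdMinY (i : Fin (n - 1)) : Set (Var n →₀ ℕ) :=
  {m | m.support ⊆ varsMinY i ∧ Finsupp.single (varY i) 1 ≤ m}

theorem standard_eq_union :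
    {m | ∀ g ∈ gens n, ¬ g ≤ m} = stdNoY n ∪ ⋃ i, stdMinY i := by
  ext m
  simp only [gens, stdNoY, stdMinY, Set.mem_ofPred_eq, Set.mem_union, Set.mem_singleton_iff,
    Set.mem_iUnion, forall_eq_or_imp, forall_exists_index, and_imp, support_subset_varsNoY,
    support_subset_varsMinY, xzGen_le_iff, Finsupp.single_le_iff]
  constructor
  · rintro ⟨hxz, hyz⟩
    by_cases hY : ∀ i, m (varY i) = 0
    · exact .inl ⟨hY, hxz⟩
    obtain ⟨i, hi : m (varY i) ≠ 0, hmin⟩ :=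
      WellFounded.has_min wellFounded_lt {i | m (varY i) ≠ 0} (by simpa [Set.Nonempty] using hY)
    refine .inr ⟨i, ⟨fun k hk => not_not.mp fun hk' => hmin k hk' hk, fun j hj => ?_⟩,
      Nat.one_le_iff_ne_zero.mpr hi⟩
    have := hyz _ i j hj rfl
    rw [yzGen_le_iff] at this
    omega
  · rintro (⟨hY, hxz⟩ | ⟨i, ⟨hlt, hge⟩, hi⟩)
    · refine ⟨hxz, ?_⟩
      rintro _ i j - rfl h
      have := (yzGen_le_iff.mp h).1
      rw [hY] at this
      omega
    refine ⟨fun h => ?_, ?_⟩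
    · have := h.2 (Fin.last n)
      rw [hge (Fin.last n) (by simp; omega)] at this
      omega
    · rintro _ i' j hij rfl h
      obtain ⟨hy, hz⟩ := yzGen_le_iff.mp h
      have hii' : ¬ i' < i := fun h' => by rw [hlt i' h'] at hy; omega
      have hji : ¬ i.1 ≤ j.1 := fun h' => by rw [hge j h'] at hz; omega
      rw [Fin.lt_def] at hii'
      omega

lemma disjoint_stdNoY_iUnion_stdMinY : Disjoint (stdNoY n) (⋃ i, stdMinY i) := by
  refine Set.disjoint_iUnion_right.mpr fun i => Set.disjoint_left.mpr fun m hA hB => ?_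
  have h0 := support_subset_varsNoY.mp hA.1 i
  have h1 := Finsupp.single_le_iff.mp hB.2
  omega

lemma pairwise_disjoint_stdMinY : Pairwise (Disjoint on (stdMinY (n := n))) := by
  refine fun i i' hne => Set.disjoint_left.mpr fun m hB hB' => ?_
  have hi := Finsupp.single_le_iff.mp hB.2
  have hi' := Finsupp.single_le_iff.mp hB'.2
  rcases hne.lt_or_gt with h | h
  · have := (support_subset_varsMinY.mp hB'.1).1 i h
    omega
  · have := (support_subset_varsMinY.mp hB.1).1 i' h
    omega

theorem hilbSeries_mul_one_sub_X_pow (K : Type) [Field K] (n : ℕ) :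
    hilbSeries (Jideal K n) * (1 - PowerSeries.X) ^ (n + 2) =
      1 - PowerSeries.X ^ (n + 2) +
        ((n - 1 : ℕ) : PowerSeries ℤ) * (PowerSeries.X * (1 - PowerSeries.X) ^ 2) := by
  have hNoY : monomialSeries (stdNoY n) * (1 - PowerSeries.X) ^ (n + 2) =
      1 - PowerSeries.X ^ (n + 2) := by
    have h := monomialSeries_supported_not_le_mul (V := varsNoY n) (g := xzGen)
      (support_subset_varsNoY.mpr fun i => by simp [xzGen])
    rwa [card_varsNoY, degree_xzGen] at h
  have hMinY (i : Fin (n - 1)) : monomialSeries (stdMinY i) * (1 - PowerSeries.X) ^ (n + 2) =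
      PowerSeries.X * (1 - PowerSeries.X) ^ 2 := by
    have h := monomialSeries_supported_le_mul (V := varsMinY i) (g := Finsupp.single (varY i) 1)
      (support_subset_varsMinY.mpr ⟨fun k hk => by simp [hk.ne'], fun j _ => by simp⟩)
    rw [card_varsMinY, Finsupp.degree_single, pow_one] at h
    rw [stdMinY, pow_add, ← mul_assoc, h]
  rw [eq_span_monomial_gens, hilbSeries_span_monomial, standard_eq_union,
    monomialSeries_union disjoint_stdNoY_iUnion_stdMinY,
    monomialSeries_iUnion pairwise_disjoint_stdMinY, add_mul, Finset.sum_mul, hNoY,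
    Finset.sum_congr rfl fun i _ => hMinY i, Finset.sum_const, Finset.card_univ, Fintype.card_fin,
    nsmul_eq_mul]

end Jideal

/-- the Hilbert series of `T/J_n` equals
`(1 + nλ - (n-2)λ² + λ³ + ⋯ + λ^{n+1})/(1-λ)^{n+1}` for `n ≥ 2`. -/
theorem stmt9 (K : Type) [Field K] (n : ℕ) (hn : 2 ≤ n) :
    hilbSeries (Jideal K n) * (1 - PowerSeries.X) ^ (n + 1) =
      1 + PowerSeries.C (n : ℤ) * PowerSeries.X
        - PowerSeries.C ((n : ℤ) - 2) * PowerSeries.X ^ 2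
        + ∑ i ∈ Finset.Icc 3 (n + 1), PowerSeries.X ^ i := by
  have hX : (1 - PowerSeries.X : PowerSeries ℤ) ≠ 0 := fun h => by
    simpa using congrArg PowerSeries.constantCoeff h
  refine mul_right_cancel₀ hX ?_
  rw [mul_assoc, ← pow_succ, Jideal.hilbSeries_mul_one_sub_X_pow,
    ← Finset.Ico_add_one_right_eq_Icc, add_mul _ (∑ i ∈ _, _),
    geom_sum_Ico_mul_neg _ (by omega), Nat.cast_sub (by omega : 1 ≤ n)]
  simp only [map_sub, map_natCast, map_ofNat, Nat.cast_one]
  ring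
end

section
/- Let S_1 = K[x, y_1, z_1, z_2] and I_1 = (x y_1, x z_1 z_2, y_1 z_1, y_1 z_2). Then reg(S_1/I_1) = 2 and the Hilbert series of S_1/I_1 equals (1 + 2λ)/(1−λ)^2. -/
open MvPolynomial

/-!
Write `x, y₁, z₁, z₂` for `X 0, X 1, X 2, X 3`.

Upper bound `reg ≤ 2`: `S/I₁` has the graded free resolution
`0 → S(-4) → S(-3)³ ⊕ S(-4) → S(-2)³ ⊕ S(-3) → S → S/I₁ → 0`, whose exactness reduces, after
cancelling `y₁`, to the exactness of the Koszul complex on `x, z₁, z₂`.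

Lower bound: lift the augmentation `ε : F₀ → S/I₁` of any graded free resolution to a
degree-preserving `ℓ : F₀ → S`, and pick `u` with `ε u = 1`, so `ℓ u ≡ 1 (mod I₁)`. If all shifts of
`F₁` were `≤ 2`, `ℓ` would map the image of `F₁` into `I₁` in degrees `≤ 2`, hence into `(y₁)`. As
`x z₁ z₂ • u` lies in that image, `y₁` would divide `x z₁ z₂ · ℓ u`, whose coefficient of `x z₁ z₂`
is `1`.

Hilbert series: the monomials of degree `t` outside `I₁` form a basis of `(S/I₁)_t`; for `t ≥ 1`
they are `y₁ᵗ`, `z₁ᵇ z₂ᵗ⁻ᵇ`, `xᵃ z₂ᵗ⁻ᵃ` (`a ≥ 1`) and `xᵃ z₁ᵗ⁻ᵃ` (`1 ≤ a < t`), `3t + 1` in all,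
and `∑ (3t + 1) λᵗ = (1 + 2λ)/(1 - λ)²`.
-/

namespace MvPolynomial

variable {σ R : Type*}

theorem IsHomogeneous.degree_eq_of_mem_support [CommSemiring R] {p : MvPolynomial σ R} {n : ℕ}
    (hp : p.IsHomogeneous n) {d : σ →₀ ℕ} (hd : d ∈ p.support) : d.degree = n := by
  rw [Finsupp.degree_eq_weight_one]
  exact hp (mem_support_iff.mp hd)

variable [CommRing R]

theorem X_dvd_sub_aeval_update_zero [DecidableEq σ] (i : σ) (f : MvPolynomial σ R) :
    X i ∣ f - aeval (Function.update X i 0) f := by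
  induction f using MvPolynomial.induction_on with
  | C a => simp
  | add p q hp hq => simpa only [map_add, add_sub_add_comm] using dvd_add hp hq
  | mul_X p j hp =>
    by_cases h : j = i
    · subst h
      simp
    · simpa [Function.update_of_ne h, ← sub_mul] using hp.mul_right (X j)

variable [IsDomain R]

theorem X_dvd_of_X_dvd_mul_X {i j : σ} (hij : i ≠ j) {f : MvPolynomial σ R}
    (h : X i ∣ f * X j) : X i ∣ f :=
  (X_prime.dvd_mul.mp h).resolve_right fun h' => hij (X_dvd_X.mp h')

theorem exists_eq_of_mul_X_add_mul_X_eq_zero {i j : σ} (hij : i ≠ j) {a b : MvPolynomial σ R}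
    (h : a * X i + b * X j = 0) : ∃ c, a = c * X j ∧ b = -(c * X i) := by
  obtain ⟨c, rfl⟩ := X_dvd_of_X_dvd_mul_X hij (f := b) ⟨-a, by linear_combination h⟩
  refine ⟨-c, ?_, by ring⟩
  have : X i * (a + c * X j) = 0 := by linear_combination h
  linear_combination (mul_eq_zero.mp this).resolve_left (X_ne_zero i)

/-- Exactness of the Koszul complex of three variables in homological degree one. -/
theorem exists_eq_of_mul_X_add_mul_X_add_mul_X_eq_zero {i j k : σ} (hij : i ≠ j) (hik : i ≠ k)
    (hjk : j ≠ k) {a b e : MvPolynomial σ R} (h : a * X i + b * X j + e * X k = 0) :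
    ∃ p q r, a = p * X j + q * X k ∧ b = -(p * X i) + r * X k ∧ e = -(q * X i) - r * X j := by
  classical
  set θ : MvPolynomial σ R →ₐ[R] MvPolynomial σ R := aeval (Function.update X i 0)
  have hθ : θ b * X j + θ e * X k = 0 := by
    simpa [θ, Function.update_of_ne hij.symm, Function.update_of_ne hik.symm] using
      congrArg θ h
  obtain ⟨r, hbr, her⟩ := exists_eq_of_mul_X_add_mul_X_eq_zero hjk hθ
  obtain ⟨b', hb'⟩ := X_dvd_sub_aeval_update_zero i b
  obtain ⟨e', he'⟩ := X_dvd_sub_aeval_update_zero i e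
  have ha : X i * (a + b' * X j + e' * X k) = 0 := by
    linear_combination h - X j * hb' - X k * he' - hθ
  have ha := (mul_eq_zero.mp ha).resolve_left (X_ne_zero i)
  exact ⟨-b', -e', r, by linear_combination ha, by linear_combination hb' + hbr,
    by linear_combination he' + her⟩

end MvPolynomial

theorem PowerSeries.mk_linear_mul_one_sub_X_sq {R : Type*} [CommRing R] (a b : R) :
    mk (fun n => (n : R) * a + b) * (1 - X) ^ 2 = C b + C (a - b) * X := by
  set F := mk fun n => (n : R) * a + b
  have hF : F * (1 - X) ^ 2 = F - F * X ^ 1 - F * X ^ 1 + F * X ^ 2 := by ring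
  ext (_ | _ | n)
  all_goals simp [hF, coeff_mul_X_pow', F]
  all_goals ring

section Graded

variable {K : Type} [Field K] {σ : Type}

abbrev QuotRes (I : Ideal (MvPolynomial σ K)) :=
  GradedFreeRes K σ (MvPolynomial σ K ⧸ I) (fun t => (quotHom I t : Set _))

theorem isHomVec_single {b : ℕ} (a : Fin b → ℕ) (j : Fin b) :
    IsHomVec a (a j) (Pi.single j (1 : MvPolynomial σ K)) := by
  intro k
  by_cases h : k = j
  · subst h
    simpa using isHomogeneous_one σ K
  · simp [Pi.single_eq_of_ne h, isHomogeneous_zero]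

theorem IsHomVec.mulVec {m n : ℕ} {a : Fin m → ℕ} {a' : Fin n → ℕ}
    {M : Matrix (Fin m) (Fin n) (MvPolynomial σ K)}
    (hM : ∀ k j, a k ≤ a' j ∧ (M k j).IsHomogeneous (a' j - a k)) {t : ℕ}
    {f : Fin n → MvPolynomial σ K} (hf : IsHomVec a' t f) : IsHomVec a t (M.mulVec f) := by
  intro k
  simp only [Matrix.mulVec, dotProduct]
  split_ifs with hk
  · refine IsHomogeneous.sum _ _ _ fun j _ => ?_
    have hfj := hf j
    have hkj := (hM k j).1
    split_ifs at hfj with hj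
    · simpa [show a' j - a k + (t - a' j) = t - a k by omega] using (hM k j).2.mul hfj
    · simpa [hfj] using isHomogeneous_zero σ K _
  · refine Finset.sum_eq_zero fun j _ => ?_
    have hfj := hf j
    rw [if_neg (by have := (hM k j).1; omega)] at hfj
    simp [hfj]

theorem QuotRes.exists_homogeneous_lift {I : Ideal (MvPolynomial σ K)} (R : QuotRes I) :
    ∃ l : (Fin (R.b 0) → MvPolynomial σ K) →ₗ[MvPolynomial σ K] MvPolynomial σ K,
      I.mkQ ∘ₗ l = R.ε ∧ ∀ t f, IsHomVec (R.a 0) t f → (l f).IsHomogeneous t := by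
  have hlift j : ∃ p : MvPolynomial σ K, p.IsHomogeneous (R.a 0 j) ∧
      I.mkQ p = R.ε (Pi.single j 1) :=
    R.hdeg0 _ _ (isHomVec_single _ j)
  choose p hp hpε using hlift
  refine ⟨Fintype.linearCombination _ p, LinearMap.pi_ext' fun j => LinearMap.ext_ring ?_,
    fun t f hf => IsHomogeneous.sum _ _ _ fun j _ => ?_⟩
  · simp [Fintype.linearCombination_apply, Pi.single_apply, hpε]
  · have hfj := hf j
    split_ifs at hfj with hj
    · simpa [Nat.sub_add_cancel hj] using hfj.mul (hp j)
    · simpa [hfj] using isHomogeneous_zero σ K t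

theorem QuotRes.exists_lt_shift {I : Ideal (MvPolynomial σ K)} (R : QuotRes I)
    (hI : ∀ w ∈ I, constantCoeff w = 0) {i : σ} {d : σ →₀ ℕ}
    (hd : monomial d (1 : K) ∈ I) (hdi : d i = 0) {r : ℕ}
    (hdvd : ∀ v ∈ I, ∀ n ≤ r, v.IsHomogeneous n → X i ∣ v) :
    ∃ j, r < R.a 1 j := by
  classical
  by_contra! hle
  obtain ⟨l, hlε, hl⟩ := R.exists_homogeneous_lift
  have hmk f : I.mkQ (l f) = R.ε f := LinearMap.congr_fun hlε f
  have hsyz : ∀ g, X i ∣ l (R.φ 0 g) := by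
    intro g
    rw [← LinearMap.comp_apply, LinearMap.pi_apply_eq_sum_univ]
    refine Finset.dvd_sum fun j _ => Dvd.dvd.mul_left (hdvd _ ?_ _ (hle j) ?_) _
    · rw [← Submodule.Quotient.mk_eq_zero, ← I.mkQ_apply, LinearMap.comp_apply, hmk,
        ← LinearMap.mem_ker, R.exact0]
      exact LinearMap.mem_range_self _ _
    · refine hl _ _ (R.hdeg 0 _ _ ?_)
      convert isHomVec_single (K := K) (R.a 1) j using 1
      ext k
      simp [Pi.single_apply, eq_comm]
  obtain ⟨u, hu⟩ := R.surj 1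
  have hu1 : constantCoeff (l u) = 1 := by
    have : l u - 1 ∈ I := by
      rw [← Submodule.Quotient.mk_eq_zero, ← I.mkQ_apply, map_sub, hmk, hu]
      exact sub_self _
    simpa [sub_eq_zero] using hI _ this
  obtain ⟨g, hg⟩ : monomial d (1 : K) • u ∈ LinearMap.range (R.φ 0) := by
    rw [← R.exact0, LinearMap.mem_ker, map_smul, hu]
    rwa [← map_one (Ideal.Quotient.mk I), ← Ideal.Quotient.mk_eq_mk,
      ← Submodule.Quotient.mk_smul, smul_eq_mul, mul_one, Submodule.Quotient.mk_eq_zero]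
  obtain ⟨q, hq⟩ := hsyz g
  have hcoeff := congrArg (coeff d) hq
  rw [hg, map_smul, smul_eq_mul, coeff_monomial_mul', coeff_X_mul'] at hcoeff
  simp [hdi, ← constantCoeff_eq, hu1] at hcoeff

theorem quotReg_eq_of_forall_exists_le {I : Ideal (MvPolynomial σ K)} {r : ℕ} (R : QuotRes I)
    (hR : ∀ i j, R.a i j ≤ i + r) (h : ∀ R' : QuotRes I, ∃ i j, i + r ≤ R'.a i j) :
    quotReg I = r := by
  refine le_antisymm (Nat.sInf_le ⟨R, hR⟩) (le_csInf ⟨r, R, hR⟩ ?_)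
  rintro m ⟨R', hR'⟩
  obtain ⟨i, j, hij⟩ := h R'
  have := hR' i j
  omega

theorem finrank_quotHom_span_monomial {G : Set (σ →₀ ℕ)} {t : ℕ} {ι : Type*} [Fintype ι]
    {e : ι → σ →₀ ℕ} (he : Function.Injective e)
    (hrange : Set.range e = {d | d.degree = t ∧ ∀ g ∈ G, ¬ g ≤ d}) :
    Module.finrank K (quotHom (Ideal.span ((fun g => monomial g (1 : K)) '' G)) t) =
      Fintype.card ι := by
  classical
  set I := Ideal.span ((fun g => monomial g (1 : K)) '' G)
  set mk := (Ideal.Quotient.mkₐ K I).toLinearMap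
  have hstd j : (e j).degree = t ∧ ∀ g ∈ G, ¬ g ≤ e j :=
    hrange.subset (Set.mem_range_self j)
  have hmem {d : σ →₀ ℕ} {c : K} (hd : ∃ g ∈ G, g ≤ d) : monomial d c ∈ I := by
    refine mem_ideal_span_monomial_image.mpr fun d' hd' => ?_
    rwa [Finset.mem_singleton.mp (support_monomial_subset hd')]
  have hli : LinearIndependent K fun j => mk (monomial (e j) 1) := by
    refine Fintype.linearIndependent_iff.mpr fun c hc j => ?_
    have hcI : ∑ i, monomial (e i) (c i) ∈ I := by
      rw [← Ideal.Quotient.eq_zero_iff_mem, ← hc]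
      change mk _ = _
      rw [map_sum]
      congr 1 with i
      rw [← map_smul, smul_monomial, smul_eq_mul, mul_one]
    have hcoeff : coeff (e j) (∑ i, monomial (e i) (c i)) = c j := by
      simp [coeff_sum, coeff_monomial, he.eq_iff]
    by_contra hcj
    obtain ⟨g, hg, hgle⟩ := mem_ideal_span_monomial_image.mp hcI (e j)
      (mem_support_iff.mpr (hcoeff ▸ hcj))
    exact (hstd j).2 g hg hgle
  have hspan : quotHom I t = Submodule.span K (Set.range fun j => mk (monomial (e j) 1)) := by
    refine le_antisymm ?_ (Submodule.span_le.mpr ?_)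
    · rintro _ ⟨p, hp, rfl⟩
      rw [as_sum p, map_sum]
      refine Submodule.sum_mem _ fun d hd => ?_
      by_cases hG : ∃ g ∈ G, g ≤ d
      · simp [mk, Ideal.Quotient.eq_zero_iff_mem.mpr (hmem hG)]
      · obtain ⟨j, rfl⟩ : d ∈ Set.range e :=
          hrange.symm.subset ⟨hp.degree_eq_of_mem_support hd, by simpa using hG⟩
        rw [← mul_one (coeff (e j) p), ← smul_eq_mul, ← smul_monomial, map_smul]
        exact Submodule.smul_mem _ _ (Submodule.subset_span ⟨j, rfl⟩)
    · rintro _ ⟨j, rfl⟩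
      exact ⟨_, isHomogeneous_monomial _ (hstd j).1, rfl⟩
  rw [hspan, finrank_span_eq_card hli]

end Graded

namespace I₁

open Finsupp (single)

noncomputable def ideal (K : Type) [Field K] : Ideal (MvPolynomial (Fin 4) K) :=
  Ideal.span {X 0 * X 1, X 0 * X 2 * X 3, X 1 * X 2, X 1 * X 3}

def gens : Set (Fin 4 →₀ ℕ) :=
  {single 0 1 + single 1 1, single 0 1 + single 2 1 + single 3 1, single 1 1 + single 2 1,
    single 1 1 + single 3 1}

abbrev rank : ℕ → ℕ
  | 0 => 1 | 1 => 4 | 2 => 4 | 3 => 1 | _ + 4 => 0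

def shift : (i : ℕ) → Fin (rank i) → ℕ
  | 0 => ![0] | 1 => ![2, 3, 2, 2] | 2 => ![3, 3, 3, 4] | 3 => ![4] | _ + 4 => ![]

noncomputable def diff (K : Type) [Field K] :
    (i : ℕ) → Matrix (Fin (rank i)) (Fin (rank (i + 1))) (MvPolynomial (Fin 4) K)
  | 0 => !![X 0 * X 1, X 0 * X 2 * X 3, X 1 * X 2, X 1 * X 3]
  | 1 => !![X 2, X 3, 0, X 2 * X 3;
            0, 0, 0, -X 1;
            -X 0, 0, X 3, 0;
            0, -X 0, -X 2, 0]
  | 2 => !![X 3; -X 2; X 0; 0]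
  | _ + 3 => 0

variable {K : Type} [Field K]

local notation "S" => MvPolynomial (Fin 4) K

theorem ideal_eq_span_monomial :
    ideal K = Ideal.span ((fun g => monomial g (1 : K)) '' gens) := by
  simp [ideal, gens, Set.image_insert_eq, X, monomial_mul]

theorem forall_mem_gens_not_le_iff {d : Fin 4 →₀ ℕ} : (∀ g ∈ gens, ¬ g ≤ d) ↔
    (d 0 = 0 ∨ d 1 = 0) ∧ (d 0 = 0 ∨ d 2 = 0 ∨ d 3 = 0) ∧ (d 1 = 0 ∨ d 2 = 0) ∧
      (d 1 = 0 ∨ d 3 = 0) := by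
  simp [gens, Finsupp.le_def, Fin.forall_fin_succ]
  omega

theorem X_one_dvd_of_mem_of_isHomogeneous {v : MvPolynomial (Fin 4) K} {n : ℕ}
    (hv : v ∈ ideal K) (hh : v.IsHomogeneous n) (hn : n ≤ 2) : X 1 ∣ v := by
  rw [← Ideal.mem_span_singleton, X, ← Set.image_singleton (f := fun g => monomial g (1 : K)),
    mem_ideal_span_monomial_image]
  intro d hd
  have hdeg := hh.degree_eq_of_mem_support hd
  rw [ideal_eq_span_monomial, mem_ideal_span_monomial_image] at hv
  obtain ⟨g, hg, hgd⟩ := hv d hd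
  simp only [gens, Set.mem_insert_iff, Set.mem_singleton_iff] at hg
  rw [Finsupp.degree_eq_sum, Fin.sum_univ_four] at hdeg
  rcases hg with rfl | rfl | rfl | rfl <;>
    simp [Finsupp.le_def, Fin.forall_fin_succ] at hgd ⊢ <;> omega

theorem monomial_mem_ideal :
    monomial (single 0 1 + single 2 1 + single 3 1) (1 : K) ∈ ideal K :=
  ideal_eq_span_monomial (K := K) ▸ Ideal.subset_span ⟨_, by simp [gens], rfl⟩

theorem constantCoeff_eq_zero_of_mem {w : MvPolynomial (Fin 4) K} (hw : w ∈ ideal K) :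
    constantCoeff w = 0 := by
  rw [ideal_eq_span_monomial, mem_ideal_span_monomial_image] at hw
  by_contra h
  obtain ⟨g, hg, hg0⟩ := hw 0 (by simpa [mem_support_iff, ← constantCoeff_eq] using h)
  simp only [gens, Set.mem_insert_iff, Set.mem_singleton_iff] at hg
  rcases hg with rfl | rfl | rfl | rfl <;> simp at hg0

theorem diff_isHomogeneous (i : ℕ) (k : Fin (rank i)) (j : Fin (rank (i + 1))) :
    shift i k ≤ shift (i + 1) j ∧
      (diff K i k j).IsHomogeneous (shift (i + 1) j - shift i k) := by
  match i, k, j with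
  | 0, k, j | 1, k, j | 2, k, j =>
    fin_cases k <;> fin_cases j <;> simp [shift, diff]
    all_goals with_reducible_and_instances first
      | exact isHomogeneous_zero _ _ _
      | exact isHomogeneous_X _ _
      | exact (isHomogeneous_X _ _).neg
      | exact (isHomogeneous_X _ _).mul (isHomogeneous_X _ _)
      | exact ((isHomogeneous_X _ _).mul (isHomogeneous_X _ _)).mul (isHomogeneous_X _ _)
  | n + 3, _, j => exact j.elim0

theorem diff_mul_diff (i : ℕ) : diff K i * diff K (i + 1) = 0 := by
  match i with
  | 0 | 1 =>
    ext k j : 1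
    fin_cases k <;> fin_cases j <;> simp [diff, Matrix.mul_apply, Fin.sum_univ_four] <;> ring
  | n + 2 => simp [diff]

theorem range_diff_zero_zero :
    Set.range (diff K 0 0) = {X 0 * X 1, X 0 * X 2 * X 3, X 1 * X 2, X 1 * X 3} := by
  ext
  simp [diff, Fin.exists_fin_succ, eq_comm]

theorem exists_mulVec_diff_one_eq {f : Fin 4 → S} (hf : (diff K 0).mulVec f = 0) :
    ∃ g, (diff K 1).mulVec g = f := by
  have h0 := congrFun hf 0
  simp [diff, Matrix.mulVec, dotProduct, Fin.sum_univ_four] at h0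
  have hdvd : X 1 ∣ f 1 * X 0 * X 2 * X 3 :=
    ⟨-(X 0 * f 0 + X 2 * f 2 + X 3 * f 3), by linear_combination h0⟩
  obtain ⟨c, hc⟩ := X_dvd_of_X_dvd_mul_X (by decide) <| X_dvd_of_X_dvd_mul_X (by decide) <|
    X_dvd_of_X_dvd_mul_X (by decide) hdvd
  have hc' : X 1 * ((f 0 + c * X 2 * X 3) * X 0 + f 2 * X 2 + f 3 * X 3) = 0 := by
    linear_combination h0 - X 0 * X 2 * X 3 * hc
  obtain ⟨p, q, r, hp, hq, hr⟩ := exists_eq_of_mul_X_add_mul_X_add_mul_X_eq_zero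
    (by decide : (0 : Fin 4) ≠ 2) (by decide) (by decide)
    ((mul_eq_zero.mp hc').resolve_left (X_ne_zero 1))
  refine ⟨![p, q, r, -c], funext fun (k : Fin 4) => ?_⟩
  fin_cases k <;> simp [diff, Matrix.mulVec, dotProduct, Fin.sum_univ_four]
  · linear_combination -hp
  · linear_combination -hc
  · linear_combination -hq
  · linear_combination -hr

theorem exists_mulVec_diff_two_eq {f : Fin 4 → S} (hf : (diff K 1).mulVec f = 0) :
    ∃ g, (diff K 2).mulVec g = f := by
  have h0 := congrFun hf 0
  have h1 := congrFun hf 1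
  have h2 := congrFun hf 2
  simp [diff, Matrix.mulVec, dotProduct, Fin.sum_univ_four] at h0 h1 h2
  obtain ⟨c, hc0, hc1⟩ := exists_eq_of_mul_X_add_mul_X_eq_zero (by decide : (2 : Fin 4) ≠ 3)
    (by linear_combination h0 - X 2 * X 3 * h1 : f 0 * X 2 + f 1 * X 3 = 0)
  have hc2 : X 3 * (f 2 - c * X 0) = 0 := by linear_combination h2 + X 0 * hc0
  refine ⟨![c], funext fun (k : Fin 4) => ?_⟩
  fin_cases k <;> simp [diff, Matrix.mulVec, dotProduct]
  · linear_combination -hc0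
  · linear_combination -hc1
  · linear_combination -((mul_eq_zero.mp hc2).resolve_left (X_ne_zero 3))
  · exact h1.symm

theorem eq_zero_of_mulVec_diff_two {g : Fin 1 → S} (hg : (diff K 2).mulVec g = 0) : g = 0 := by
  have h0 := congrFun hg 0
  simp [diff, Matrix.mulVec, dotProduct] at h0
  exact funext fun k => by simpa [Fin.fin_one_eq_zero k] using h0

theorem ker_toLin'_diff (i : ℕ) :
    LinearMap.ker (Matrix.toLin' (diff K i)) =
      LinearMap.range (Matrix.toLin' (diff K (i + 1))) := by
  refine le_antisymm (fun f hf => ?_)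
    (LinearMap.range_le_ker_iff.mpr (by rw [← Matrix.toLin'_mul, diff_mul_diff, map_zero]))
  rw [LinearMap.mem_ker, Matrix.toLin'_apply] at hf
  simp only [LinearMap.mem_range, Matrix.toLin'_apply]
  match i with
  | 0 => exact exists_mulVec_diff_one_eq hf
  | 1 => exact exists_mulVec_diff_two_eq hf
  | 2 => exact ⟨0, by simp [eq_zero_of_mulVec_diff_two hf]⟩
  | n + 3 => exact ⟨0, Subsingleton.elim _ _⟩

theorem ker_mkQ_comp_proj :
    LinearMap.ker ((ideal K).mkQ ∘ₗ LinearMap.proj 0) =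
      LinearMap.range (Matrix.toLin' (diff K 0)) := by
  ext f
  rw [LinearMap.mem_ker, LinearMap.comp_apply, Submodule.mkQ_apply, Submodule.Quotient.mk_eq_zero,
    ideal, ← range_diff_zero_zero, Submodule.mem_span_range_iff_exists_fun]
  simp only [LinearMap.mem_range, Matrix.toLin'_apply, funext_iff, Fin.forall_fin_one]
  simp [Matrix.mulVec, dotProduct, mul_comm]

noncomputable def resolution : QuotRes (ideal K) where
  b := rank
  a := shift
  φ i := Matrix.toLin' (diff K i)
  ε := (ideal K).mkQ ∘ₗ LinearMap.proj 0
  surj := by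
    intro q
    obtain ⟨p, rfl⟩ := Submodule.mkQ_surjective _ q
    exact ⟨fun _ => p, rfl⟩
  exact0 := ker_mkQ_comp_proj
  exact := ker_toLin'_diff
  hdeg i _ _ hf := by
    rw [Matrix.toLin'_apply]
    exact hf.mulVec (diff_isHomogeneous i)
  hdeg0 t f hf := ⟨f 0, by simpa [shift] using hf 0, rfl⟩

theorem shift_le (i : ℕ) (j : Fin (rank i)) : shift i j ≤ i + 2 := by
  match i with
  | 0 | 1 | 2 | 3 => fin_cases j <;> simp [shift]
  | _ + 4 => exact j.elim0

theorem quotReg_ideal : quotReg (ideal K) = 2 := by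
  refine quotReg_eq_of_forall_exists_le resolution shift_le fun R => ?_
  obtain ⟨j, hj⟩ := R.exists_lt_shift (fun _ => constantCoeff_eq_zero_of_mem)
    monomial_mem_ideal (by simp) fun _ hv _ hn hh => X_one_dvd_of_mem_of_isHomogeneous hv hh hn
  exact ⟨1, j, by omega⟩

noncomputable def stdExp (n : ℕ) :
    Unit ⊕ Fin (n + 2) ⊕ Fin (n + 1) ⊕ Fin n → Fin 4 →₀ ℕ
  | .inl _ => single 1 (n + 1)
  | .inr (.inl b) => single 2 b.val + single 3 (n + 1 - b)
  | .inr (.inr (.inl a)) => single 0 (a.val + 1) + single 3 (n - a)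
  | .inr (.inr (.inr c)) => single 0 (n - c.val) + single 2 (c.val + 1)

theorem stdExp_injective (n : ℕ) : Function.Injective (stdExp n) := by
  intro j j' h
  have h0 := DFunLike.congr_fun h 0
  have h1 := DFunLike.congr_fun h 1
  have h2 := DFunLike.congr_fun h 2
  rcases j with _ | b | a | c <;> rcases j' with _ | b' | a' | c'
  all_goals simp [stdExp] at h0 h1 h2 ⊢ <;> omega

theorem range_stdExp (n : ℕ) :
    Set.range (stdExp n) = {d | d.degree = n + 1 ∧ ∀ g ∈ gens, ¬ g ≤ d} := by
  ext d
  simp only [Set.mem_range, Set.mem_ofPred_eq, forall_mem_gens_not_le_iff, Finsupp.degree_eq_sum,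
    Fin.sum_univ_four]
  constructor
  · rintro ⟨_ | b | a | c, rfl⟩ <;> simp [stdExp] <;> omega
  · rintro ⟨hdeg, h01, h023, h12, h13⟩
    obtain ⟨j, hj⟩ : ∃ j, ∀ i, stdExp n j i = d i := by
      by_cases h1 : d 1 = 0
      · by_cases h0 : d 0 = 0
        · refine ⟨.inr (.inl ⟨d 2, by omega⟩), fun i => ?_⟩
          fin_cases i <;> simp [stdExp] <;> omega
        by_cases h2 : d 2 = 0
        · refine ⟨.inr (.inr (.inl ⟨d 0 - 1, by omega⟩)), fun i => ?_⟩
          fin_cases i <;> simp [stdExp] <;> omega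
        · refine ⟨.inr (.inr (.inr ⟨d 2 - 1, by omega⟩)), fun i => ?_⟩
          fin_cases i <;> simp [stdExp] <;> omega
      · refine ⟨.inl (), fun i => ?_⟩
        fin_cases i <;> simp [stdExp] <;> omega
    exact ⟨j, Finsupp.ext hj⟩

theorem finrank_quotHom (t : ℕ) : Module.finrank K (quotHom (ideal K) t) = 3 * t + 1 := by
  rw [ideal_eq_span_monomial]
  cases t with
  | zero =>
    rw [finrank_quotHom_span_monomial (ι := Unit) (e := fun _ => 0) (fun _ _ _ => rfl)]
    · rfl
    ext d
    simp [forall_mem_gens_not_le_iff, Finsupp.degree_eq_zero_iff]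
    rintro rfl
    simp
  | succ n =>
    rw [finrank_quotHom_span_monomial (stdExp_injective n) (range_stdExp n)]
    simp
    ring

theorem hilbSeries_mul_one_sub_X_sq :
    hilbSeries (ideal K) * (1 - PowerSeries.X) ^ 2 = 1 + 2 * PowerSeries.X := by
  have : hilbSeries (ideal K) = PowerSeries.mk fun n => (n : ℤ) * 3 + 1 := by
    ext n
    simp [hilbSeries, finrank_quotHom]
    ring
  rw [this, PowerSeries.mk_linear_mul_one_sub_X_sq]
  norm_num

end I₁

/-- for `S₁ = K[x, y₁, z₁, z₂]` (with `x = X 0`, `y₁ = X 1`, `z₁ = X 2`,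
`z₂ = X 3`) and `I₁ = (xy₁, xz₁z₂, y₁z₁, y₁z₂)`, one has `reg(S₁/I₁) = 2` and
`H_{S₁/I₁}(λ) = (1+2λ)/(1-λ)²`. -/
theorem stmt14 (K : Type) [Field K] :
    let I : Ideal (MvPolynomial (Fin 4) K) := Ideal.span
      {X 0 * X 1, X 0 * X 2 * X 3, X 1 * X 2, X 1 * X 3}
    quotReg I = 2 ∧
    hilbSeries I * (1 - PowerSeries.X) ^ 2 =
      (1 + 2 * PowerSeries.X : PowerSeries ℤ) :=
  ⟨I₁.quotReg_ideal, I₁.hilbSeries_mul_one_sub_X_sq⟩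
end
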